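/- arXiv:2301.05495 — 6 statements merged into one kernel-verified Lean document; each statement's English description precedes it below -/
import Mathlib

section
/- For every integer n ≥ 1 and every real w with 0 ≤ w < n, the function t ↦ B̄_{n,t}(w) is strictly increasing on [0,1]. -/
lemma cast_mul_choose (n k : ℕ) (hk : 1 ≤ k) (hn : 1 ≤ n) :
    (k : ℝ) * n.choose k = n * (n-1).choose (k-1) := by
  obtain ⟨n, rfl⟩ := Nat.exists_eq_add_of_le hn
  obtain ⟨k, rfl⟩ := Nat.exists_eq_add_of_le hk
  have h : (k + 1) * (n + 1).choose (k + 1) = (n + 1) * n.choose k := by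
    have := Nat.add_one_mul_choose_eq n k
    rw [Nat.mul_comm (k+1)]
    omega
  have h1 : 1 + k = k + 1 := by omega
  have h2 : 1 + n = n + 1 := by omega
  rw [h1, h2]
  have := congrArg (Nat.cast : ℕ → ℝ) h
  push_cast at this
  simp only [Nat.add_sub_cancel]
  push_cast
  linarith [this]

lemma cast_sub_mul_choose (n k : ℕ) (hn : 1 ≤ n) :
    ((n - k : ℕ) : ℝ) * n.choose k = n * (n-1).choose k := by
  rcases le_or_gt k n with hkn | hkn
  · rcases Nat.eq_zero_or_pos k with rfl | hk
    · simp
    · have h1 : (n : ℝ) * n.choose k = (k : ℝ) * n.choose k + ((n-k:ℕ):ℝ) * n.choose k := by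
        have : ((n - k : ℕ) : ℝ) = (n : ℝ) - k := by
          rw [Nat.cast_sub hkn]
        rw [this]; ring
      have h2 : (n.choose k : ℝ) = (n-1).choose k + (n-1).choose (k-1) := by
        have h : n.choose k = (n-1).choose k + (n-1).choose (k-1) := by
          obtain ⟨n, rfl⟩ := Nat.exists_eq_add_of_le hn
          obtain ⟨k, rfl⟩ := Nat.exists_eq_add_of_le hk
          simp [Nat.choose_succ_succ, Nat.add_comm]
        exact_mod_cast congrArg (Nat.cast : ℕ → ℝ) h
      have h3 := cast_mul_choose n k hk hn
      nlinarith [h1, h2, h3]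
  · have h1 : n - k = 0 := by omega
    have h2 : n.choose k = 0 := Nat.choose_eq_zero_of_lt hkn
    have h3 : (n-1).choose k = 0 := Nat.choose_eq_zero_of_lt (by omega)
    simp [h1, h2, h3]

/-- For every integer `n ≥ 1` and every real `w` with `0 ≤ w < n`, the map
`t ↦ B̄_{n,t}(w) = ∑_{k=⌊w⌋+1}^{n} C(n,k) t^k (1-t)^{n-k}` (the survival function of the
Binomial(n,t) distribution at `w`) is strictly increasing on `[0,1]`. -/
theorem stmt_1 (n : ℕ) (hn : 1 ≤ n) (w : ℝ) (hw0 : 0 ≤ w) (hwn : w < n) :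
    StrictMonoOn
      (fun t : ℝ => ∑ k ∈ Finset.Icc ((⌊w⌋).toNat + 1) n,
        (n.choose k : ℝ) * t ^ k * (1 - t) ^ (n - k))
      (Set.Icc 0 1) := by
  set m := (⌊w⌋).toNat with hm
  have hmn : m < n := by
    have h1 : ⌊w⌋ < (n : ℤ) := by
      rw [Int.floor_lt]; exact_mod_cast hwn
    have h2 : (0:ℤ) ≤ ⌊w⌋ := Int.floor_nonneg.mpr hw0
    omega
  set g : ℕ → ℝ → ℝ := fun j t => ((n-1).choose j : ℝ) * t ^ j * (1 - t) ^ (n - 1 - j) with hg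
  -- derivative of each term
  have hterm : ∀ t : ℝ, ∀ k ∈ Finset.Icc (m+1) n,
      HasDerivAt (fun t : ℝ => (n.choose k : ℝ) * t ^ k * (1 - t) ^ (n - k))
        ((n:ℝ) * (g (k-1) t - g k t)) t := by
    intro t k hk
    simp only [Finset.mem_Icc] at hk
    obtain ⟨hk1, hkn⟩ := hk
    have h0 : HasDerivAt (fun t : ℝ => 1 - t) (-1) t := by
      simpa using (hasDerivAt_id t).const_sub 1
    have h2 := h0.pow (n - k)
    have h1 := hasDerivAt_pow k t
    have key : (n:ℝ) * (g (k-1) t - g k t)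
        = (n.choose k : ℝ) * (↑k * t ^ (k-1) * (1-t)^(n-k) + t ^ k * (↑(n-k) * (1-t)^(n-k-1) * (-1))) := by
      simp only [hg]
      have e1 : n - 1 - (k - 1) = n - k := by omega
      have e2 : n - 1 - k = n - k - 1 := by omega
      rw [e1, e2]
      have c1 := cast_mul_choose n k (by omega) hn
      have c2 := cast_sub_mul_choose n k hn
      linear_combination (t^k*(1-t)^(n-k-1)) * c2 - (t^(k-1)*(1-t)^(n-k)) * c1
    rw [key]
    have heq : (fun t : ℝ => (n.choose k : ℝ) * t ^ k * (1 - t) ^ (n - k))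
        = fun y : ℝ => (n.choose k : ℝ) * (y ^ k * (1 - y) ^ (n - k)) := by
      funext y; ring
    rw [heq]
    exact (h1.mul h2).const_mul (n.choose k : ℝ)
  have hderiv : ∀ t : ℝ,
      HasDerivAt (fun t : ℝ => ∑ k ∈ Finset.Icc (m + 1) n,
          (n.choose k : ℝ) * t ^ k * (1 - t) ^ (n - k))
        ((n:ℝ) * g m t) t := by
    intro t
    have hsum := HasDerivAt.fun_sum (hterm t)
    have htel : ∑ k ∈ Finset.Icc (m+1) n, (n:ℝ) * (g (k-1) t - g k t) = (n:ℝ) * g m t := by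
      rw [← Finset.mul_sum]
      congr 1
      rw [← Finset.Ico_add_one_right_eq_Icc, Finset.sum_Ico_eq_sum_range]
      have e3 : n + 1 - (m + 1) = n - m := by omega
      rw [e3]
      have e4 : ∀ i, g (m + 1 + i - 1) t - g (m + 1 + i) t = g (m + i) t - g (m + (i+1)) t := by
        intro i
        congr 2 <;> omega
      rw [Finset.sum_congr rfl fun i _ => e4 i]
      rw [Finset.sum_range_sub' (fun i => g (m + i) t)]
      have e5 : m + (n - m) = n := by omega
      rw [e5]
      have : g n t = 0 := by
        simp only [hg]
        rw [Nat.choose_eq_zero_of_lt (by omega)]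
        simp
      rw [this, Nat.add_zero, sub_zero]
    rw [← htel]
    exact hsum
  apply strictMonoOn_of_deriv_pos (convex_Icc 0 1)
  · apply Continuous.continuousOn
    apply continuous_finset_sum
    intro k _
    fun_prop
  · intro t ht
    rw [interior_Icc] at ht
    rw [HasDerivAt.deriv (hderiv t)]
    have h1 : (0:ℝ) < t := ht.1
    have h2 : (0:ℝ) < 1 - t := by linarith [ht.2]
    have h3 : 0 < (n-1).choose m := Nat.choose_pos (by omega)
    simp only [hg]
    positivity
end

section
/- Let n ≥ 2 be an integer, let ρ ∈ (1,n) and let w be a real number with 0 ≤ w < n. For t ∈ (0,1) set α(t) = t(n−ρ)/(ρ−1) and β(t) = (1−t)(n−ρ)/(ρ−1), and define the Beta-Binomial survival function B̄_{n,t,ρ}(w) = ∫_0^1 B̄_{n,θ}(w) · θ^{α(t)−1}(1−θ)^{β(t)−1} / B(α(t),β(t)) dθ, where B(α,β) = ∫_0^1 θ^{α−1}(1−θ)^{β−1} dθ is the Beta function. Then the map t ↦ B̄_{n,t,ρ}(w) is strictly increasing on (0,1), and 0 < B̄_{n,t,ρ}(w) < 1 for every t ∈ (0,1). -/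
open Finset

/-- Rising factorial `x (x+1) ⋯ (x+k-1)`. -/
noncomputable def asc (x : ℝ) (k : ℕ) : ℝ := ∏ j ∈ Finset.range k, (x + j)

lemma asc_pos {x : ℝ} (hx : 0 < x) (k : ℕ) : 0 < asc x k :=
  Finset.prod_pos fun j _ => by positivity

lemma asc_succ (x : ℝ) (k : ℕ) : asc x (k + 1) = asc x k * (x + k) :=
  Finset.prod_range_succ _ _

lemma Gamma_asc {x : ℝ} (hx : 0 < x) (k : ℕ) :
    Real.Gamma (x + k) = asc x k * Real.Gamma x := by
  induction k with
  | zero => simp [asc]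
  | succ k ih =>
    have hxk : (x + k) ≠ 0 := by positivity
    have : x + (k + 1 : ℕ) = (x + k) + 1 := by push_cast; ring
    rw [this, Real.Gamma_add_one hxk, ih, asc_succ]; ring

lemma asc_vandermonde (a b : ℝ) (n : ℕ) :
    ∑ k ∈ Finset.range (n + 1), (n.choose k : ℝ) * asc a k * asc b (n - k)
      = asc (a + b) n := by
  induction n with
  | zero => simp [asc]
  | succ n ih =>
    have split : ∀ k ∈ Finset.range (n + 1),
        (n.choose k : ℝ) * asc a k * asc b (n + 1 - k)
          = (n.choose k : ℝ) * asc a k * asc b (n - k) * (b + (n - k : ℕ)) := by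
      intro k hk
      have hk' : k ≤ n := Nat.lt_succ_iff.mp (Finset.mem_range.mp hk)
      have : n + 1 - k = (n - k) + 1 := by omega
      rw [this, asc_succ]; ring
    calc ∑ k ∈ Finset.range (n + 2), ((n+1).choose k : ℝ) * asc a k * asc b (n + 1 - k)
        = ∑ k ∈ Finset.range (n + 1), ((n+1).choose (k+1) : ℝ) * asc a (k+1) * asc b (n - k)
          + (1 : ℝ) * asc a 0 * asc b (n+1) := by
          rw [Finset.sum_range_succ'] ; simp
      _ = (∑ k ∈ Finset.range (n + 1), (n.choose k : ℝ) * asc a (k+1) * asc b (n - k))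
          + ((∑ k ∈ Finset.range (n + 1), (n.choose (k+1) : ℝ) * asc a (k+1) * asc b (n - k))
            + (1 : ℝ) * asc a 0 * asc b (n+1)) := by
          rw [← add_assoc, ← Finset.sum_add_distrib]
          congr 1
          apply Finset.sum_congr rfl
          intro k _
          rw [Nat.choose_succ_succ]
          push_cast; ring
      _ = (∑ k ∈ Finset.range (n + 1), (n.choose k : ℝ) * asc a k * asc b (n - k) * (a + k))
          + ∑ k ∈ Finset.range (n + 1), (n.choose k : ℝ) * asc a k * asc b (n + 1 - k) := by
          congr 1
          · apply Finset.sum_congr rfl; intro k _; rw [asc_succ]; ring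
          · rw [Finset.sum_range_succ' (fun k => (n.choose k : ℝ) * asc a k * asc b (n + 1 - k)) n,
                Finset.sum_range_succ (fun k => (n.choose (k+1) : ℝ) * asc a (k+1) * asc b (n - k)) n]
            simp only [Nat.choose_succ_self, Nat.cast_zero, zero_mul, add_zero,
              Nat.choose_zero_right, Nat.cast_one, Nat.sub_zero, Nat.succ_sub_succ]
      _ = ∑ k ∈ Finset.range (n + 1),
            (n.choose k : ℝ) * asc a k * asc b (n - k) * ((a + k) + (b + (n - k : ℕ))) := by
          rw [Finset.sum_congr rfl split, ← Finset.sum_add_distrib]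
          apply Finset.sum_congr rfl; intro k _; ring
      _ = (a + b + n) * ∑ k ∈ Finset.range (n + 1), (n.choose k : ℝ) * asc a k * asc b (n - k) := by
          rw [Finset.mul_sum]
          apply Finset.sum_congr rfl
          intro k hk
          have hk' : k ≤ n := Nat.lt_succ_iff.mp (Finset.mem_range.mp hk)
          have : ((n - k : ℕ) : ℝ) = (n : ℝ) - k := by
            push_cast [Nat.cast_sub hk']; ring
          rw [this]; ring
      _ = asc (a + b) (n + 1) := by rw [ih, asc_succ]; ring

/-- Survival function of the Binomial(n,t) distribution at the real threshold `w`: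
`B̄_{n,t}(w) = ∑_{k=⌊w⌋+1}^{n} C(n,k) t^k (1-t)^{n-k}`. -/
noncomputable def binomSurv (n : ℕ) (t : ℝ) (w : ℝ) : ℝ :=
  ∑ k ∈ Finset.Icc ((⌊w⌋).toNat + 1) n, (n.choose k : ℝ) * t ^ k * (1 - t) ^ (n - k)

/-- The Beta function `B(a,b) = ∫_0^1 θ^{a-1}(1-θ)^{b-1} dθ`. -/
noncomputable def betaFn (a b : ℝ) : ℝ :=
  ∫ θ in (0 : ℝ)..1, θ ^ (a - 1) * (1 - θ) ^ (b - 1)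

/-- The Beta-Binomial survival function `B̄_{n,t,ρ}(w)`: the mixture of Binomial(n,θ) survival
functions with θ drawn from the Beta(α(t),β(t)) distribution, where
`α(t) = t(n-ρ)/(ρ-1)` and `β(t) = (1-t)(n-ρ)/(ρ-1)`. -/
noncomputable def betaBinomSurv (n : ℕ) (ρ : ℝ) (w : ℝ) (t : ℝ) : ℝ :=
  ∫ θ in (0 : ℝ)..1,
    binomSurv n θ w *
      (θ ^ (t * ((n : ℝ) - ρ) / (ρ - 1) - 1) *
          (1 - θ) ^ ((1 - t) * ((n : ℝ) - ρ) / (ρ - 1) - 1) /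
        betaFn (t * ((n : ℝ) - ρ) / (ρ - 1)) ((1 - t) * ((n : ℝ) - ρ) / (ρ - 1)))


open MeasureTheory

lemma complex_integrand_eq {a b x : ℝ} (hx0 : 0 ≤ x) (hx1 : x ≤ 1) :
    (x : ℂ) ^ ((a : ℂ) - 1) * ((1 : ℂ) - x) ^ ((b : ℂ) - 1)
      = ((x ^ (a - 1) * (1 - x) ^ (b - 1) : ℝ) : ℂ) := by
  have h1 : ((x ^ (a - 1) : ℝ) : ℂ) = (x : ℂ) ^ ((a : ℂ) - 1) := by
    rw [Complex.ofReal_cpow hx0]; norm_num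
  have h2 : (((1 - x) ^ (b - 1) : ℝ) : ℂ) = ((1 : ℂ) - x) ^ ((b : ℂ) - 1) := by
    rw [Complex.ofReal_cpow (by linarith)]; push_cast; norm_num
  rw [Complex.ofReal_mul, h1, h2]

lemma betaFn_intervalIntegrable {a b : ℝ} (ha : 0 < a) (hb : 0 < b) :
    IntervalIntegrable (fun x : ℝ => x ^ (a - 1) * (1 - x) ^ (b - 1)) volume 0 1 := by
  have h := Complex.betaIntegral_convergent (u := a) (v := b) (by simpa) (by simpa)
  have h' : IntervalIntegrable
      (fun x : ℝ => ((x : ℂ) ^ ((a : ℂ) - 1) * ((1 : ℂ) - x) ^ ((b : ℂ) - 1)).re)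
      volume 0 1 := ⟨h.1.re, h.2.re⟩
  apply h'.congr_ae
  rw [Filter.EventuallyEq, ae_restrict_iff' measurableSet_uIoc]
  filter_upwards with x hx
  rw [Set.uIoc_of_le (by norm_num : (0:ℝ) ≤ 1)] at hx
  rw [complex_integrand_eq hx.1.le hx.2, Complex.ofReal_re]

lemma betaFn_eq {a b : ℝ} (ha : 0 < a) (hb : 0 < b) :
    betaFn a b = Real.Gamma a * Real.Gamma b / Real.Gamma (a + b) := by
  have hc : (betaFn a b : ℂ) = Complex.betaIntegral a b := by
    rw [betaFn, Complex.betaIntegral, ← intervalIntegral.integral_ofReal]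
    apply intervalIntegral.integral_congr_ae
    filter_upwards with x hx
    rw [Set.uIoc_of_le (by norm_num : (0:ℝ) ≤ 1)] at hx
    exact (complex_integrand_eq hx.1.le hx.2).symm
  have hG := Complex.Gamma_mul_Gamma_eq_betaIntegral
      (s := a) (t := b) (by simpa) (by simpa)
  rw [← hc, ← Complex.ofReal_add, Complex.Gamma_ofReal, Complex.Gamma_ofReal,
    Complex.Gamma_ofReal] at hG
  have hG' : Real.Gamma a * Real.Gamma b = Real.Gamma (a + b) * betaFn a b := by
    exact_mod_cast hG
  have hpos : 0 < Real.Gamma (a + b) := Real.Gamma_pos_of_pos (by linarith)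
  field_simp [hG']
  linarith [hG']

lemma pow_mul_integrand_eq {a b : ℝ} (hb : 0 < b) (k l : ℕ) {x : ℝ}
    (hx : x ∈ Set.Ioc (0:ℝ) 1) :
    x ^ k * (1 - x) ^ l * (x ^ (a - 1) * (1 - x) ^ (b - 1))
      = x ^ (a + k - 1) * (1 - x) ^ (b + l - 1) := by
  obtain ⟨hx0, hx1⟩ := hx
  have hxk : (x : ℝ) ^ k * x ^ (a - 1) = x ^ (a + k - 1) := by
    rw [← Real.rpow_natCast x k, ← Real.rpow_add hx0]
    ring_nf
  rcases lt_or_eq_of_le (sub_nonneg.mpr hx1) with h1x | h1x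
  · have : (1 - x) ^ l * (1 - x) ^ (b - 1) = (1 - x) ^ (b + l - 1) := by
      rw [← Real.rpow_natCast (1-x) l, ← Real.rpow_add h1x]
      ring_nf
    rw [← this, ← hxk]; ring
  · rw [← h1x]
    rcases Nat.eq_zero_or_pos l with hl | hl
    · subst hl; push_cast; rw [← hxk]; ring_nf
    · have hl' : (1:ℝ) ≤ l := by exact_mod_cast hl
      have hne : b + l - 1 ≠ 0 := ne_of_gt (by linarith)
      rw [Real.zero_rpow hne, zero_pow (by omega : l ≠ 0)]
      ring

lemma pow_mul_intervalIntegrable {a b : ℝ} (ha : 0 < a) (hb : 0 < b) (k l : ℕ) :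
    IntervalIntegrable
      (fun x : ℝ => x ^ k * (1 - x) ^ l * (x ^ (a - 1) * (1 - x) ^ (b - 1)))
      volume 0 1 := by
  have h := betaFn_intervalIntegrable (a := a + k) (b := b + l)
    (by positivity) (by positivity)
  apply h.congr_ae
  rw [Filter.EventuallyEq, ae_restrict_iff' measurableSet_uIoc]
  filter_upwards with x hx
  rw [Set.uIoc_of_le (by norm_num : (0:ℝ) ≤ 1)] at hx
  exact (pow_mul_integrand_eq hb k l hx).symm

lemma integral_pow_mul {a b : ℝ} (ha : 0 < a) (hb : 0 < b) (k l : ℕ) :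
    (∫ x in (0:ℝ)..1, x ^ k * (1 - x) ^ l * (x ^ (a - 1) * (1 - x) ^ (b - 1)))
      = betaFn (a + k) (b + l) := by
  rw [betaFn]
  apply intervalIntegral.integral_congr_ae
  filter_upwards with x hx
  rw [Set.uIoc_of_le (by norm_num : (0:ℝ) ≤ 1)] at hx
  exact pow_mul_integrand_eq hb k l hx

lemma key_reduction (n m : ℕ) {a b : ℝ} (ha : 0 < a) (hb : 0 < b) :
    (∫ θ in (0:ℝ)..1,
      (∑ k ∈ Finset.Icc (m+1) n, (n.choose k : ℝ) * θ ^ k * (1 - θ) ^ (n - k)) *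
        (θ ^ (a - 1) * (1 - θ) ^ (b - 1) / betaFn a b))
      = (∑ k ∈ Finset.Icc (m+1) n, (n.choose k : ℝ) * asc a k * asc b (n - k))
          / asc (a + b) n := by
  have hstep1 : (∫ θ in (0:ℝ)..1,
      (∑ k ∈ Finset.Icc (m+1) n, (n.choose k : ℝ) * θ ^ k * (1 - θ) ^ (n - k)) *
        (θ ^ (a - 1) * (1 - θ) ^ (b - 1) / betaFn a b))
      = ∫ θ in (0:ℝ)..1, ∑ k ∈ Finset.Icc (m+1) n,
          ((n.choose k : ℝ) / betaFn a b) *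
            (θ ^ k * (1 - θ) ^ (n - k) * (θ ^ (a - 1) * (1 - θ) ^ (b - 1))) := by
    apply intervalIntegral.integral_congr
    intro x _
    dsimp only
    rw [Finset.sum_mul]
    apply Finset.sum_congr rfl
    intro k _
    ring
  rw [hstep1, intervalIntegral.integral_finset_sum]
  · have : ∀ k ∈ Finset.Icc (m+1) n,
        (∫ θ in (0:ℝ)..1, ((n.choose k : ℝ) / betaFn a b) *
          (θ ^ k * (1 - θ) ^ (n - k) * (θ ^ (a - 1) * (1 - θ) ^ (b - 1))))
        = (n.choose k : ℝ) * asc a k * asc b (n - k) / asc (a + b) n := by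
      intro k hk
      have hkn : k ≤ n := (Finset.mem_Icc.mp hk).2
      rw [intervalIntegral.integral_const_mul, integral_pow_mul ha hb]
      have hsum : a + (k:ℝ) + (b + ((n - k : ℕ) : ℝ)) = (a + b) + n := by
        push_cast [Nat.cast_sub hkn]; ring
      have e2 : betaFn (a + k) (b + (n - k : ℕ))
          = asc a k * asc b (n - k) * (Real.Gamma a * Real.Gamma b)
              / (asc (a + b) n * Real.Gamma (a + b)) := by
        rw [betaFn_eq (by positivity) (by positivity), hsum, Gamma_asc ha,
          Gamma_asc hb, Gamma_asc (by positivity : (0:ℝ) < a + b)]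
        ring
      rw [e2, betaFn_eq ha hb]
      have g1 := Real.Gamma_pos_of_pos ha
      have g2 := Real.Gamma_pos_of_pos hb
      have g3 := Real.Gamma_pos_of_pos (by positivity : (0:ℝ) < a + b)
      have p1 := asc_pos (by positivity : (0:ℝ) < a + b) n
      field_simp
    rw [Finset.sum_congr rfl this, Finset.sum_div]
  · intro k _
    exact (pow_mul_intervalIntegrable ha hb k (n - k)).const_mul _

lemma asc_split (x : ℝ) {j k : ℕ} (h : j ≤ k) :
    asc x k = asc x j * ∏ i ∈ Finset.Ico j k, (x + i) :=
  (Finset.prod_range_mul_prod_Ico _ h).symm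

lemma cross_lt {c : ℝ} (hc : 0 < c) {t1 t2 : ℝ} (ht1 : t1 ∈ Set.Ioo (0:ℝ) 1)
    (ht2 : t2 ∈ Set.Ioo (0:ℝ) 1) (h12 : t1 < t2) {j k n : ℕ} (hjk : j < k) (hkn : k ≤ n) :
    asc (t1*c) k * asc ((1-t1)*c) (n-k) * (asc (t2*c) j * asc ((1-t2)*c) (n-j))
      < asc (t2*c) k * asc ((1-t2)*c) (n-k) * (asc (t1*c) j * asc ((1-t1)*c) (n-j)) := by
  have ha1 : 0 < t1 * c := mul_pos ht1.1 hc
  have ha2 : 0 < t2 * c := mul_pos ht2.1 hc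
  have hb1 : 0 < (1 - t1) * c := mul_pos (by linarith [ht1.2]) hc
  have hb2 : 0 < (1 - t2) * c := mul_pos (by linarith [ht2.2]) hc
  have ha12 : t1 * c < t2 * c := by nlinarith
  have hb21 : (1 - t2) * c < (1 - t1) * c := by nlinarith
  have hsub : n - k ≤ n - j := by omega
  rw [asc_split (t1*c) hjk.le, asc_split (t2*c) hjk.le,
    asc_split ((1-t1)*c) hsub, asc_split ((1-t2)*c) hsub]
  have hP : (∏ i ∈ Finset.Ico j k, (t1*c + i)) < ∏ i ∈ Finset.Ico j k, (t2*c + i) :=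
    Finset.prod_lt_prod_of_nonempty (fun i _ => by positivity)
      (fun i _ => by linarith) (by rw [Finset.nonempty_Ico]; omega)
  have hQ : (∏ i ∈ Finset.Ico (n-k) (n-j), ((1-t2)*c + i))
      < ∏ i ∈ Finset.Ico (n-k) (n-j), ((1-t1)*c + i) :=
    Finset.prod_lt_prod_of_nonempty (fun i _ => by positivity)
      (fun i _ => by linarith) (by rw [Finset.nonempty_Ico]; omega)
  have hPpos : 0 < ∏ i ∈ Finset.Ico j k, (t1*c + i) :=
    Finset.prod_pos fun i _ => by positivity
  have hQpos : 0 < ∏ i ∈ Finset.Ico (n-k) (n-j), ((1-t2)*c + i) :=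
    Finset.prod_pos fun i _ => by positivity
  have hkey : (∏ i ∈ Finset.Ico j k, (t1*c + i)) *
        (∏ i ∈ Finset.Ico (n-k) (n-j), ((1-t2)*c + i))
      < (∏ i ∈ Finset.Ico j k, (t2*c + i)) *
        (∏ i ∈ Finset.Ico (n-k) (n-j), ((1-t1)*c + i)) :=
    mul_lt_mul'' hP hQ hPpos.le hQpos.le
  have hcommon : 0 < asc (t1*c) j * asc (t2*c) j * asc ((1-t1)*c) (n-k)
      * asc ((1-t2)*c) (n-k) :=
    mul_pos (mul_pos (mul_pos (asc_pos ha1 j) (asc_pos ha2 j)) (asc_pos hb1 (n-k))) (asc_pos hb2 (n-k))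
  nlinarith [mul_lt_mul_of_pos_left hkey hcommon]

lemma Icc_split (n m : ℕ) (hmn : m + 1 ≤ n) (f : ℕ → ℝ) :
    ∑ k ∈ Finset.Icc 0 m, f k + ∑ k ∈ Finset.Icc (m+1) n, f k
      = ∑ k ∈ Finset.range (n+1), f k := by
  rw [← Finset.sum_union (by
    rw [Finset.disjoint_left]; intro x hx hx'
    simp only [Finset.mem_Icc] at hx hx'; omega)]
  apply Finset.sum_congr _ (fun _ _ => rfl)
  ext x
  simp only [Finset.mem_union, Finset.mem_Icc, Finset.mem_range]
  omega

lemma full_sum (c : ℝ) (t : ℝ) (n : ℕ) :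
    ∑ k ∈ Finset.range (n+1), (n.choose k : ℝ) * asc (t*c) k * asc ((1-t)*c) (n-k)
      = asc c n := by
  have := asc_vandermonde (t*c) ((1-t)*c) n
  rwa [show t*c + (1-t)*c = c by ring] at this

lemma tail_sum_lt {c : ℝ} (hc : 0 < c) {n m : ℕ} (hmn : m + 1 ≤ n) {t1 t2 : ℝ}
    (ht1 : t1 ∈ Set.Ioo (0:ℝ) 1) (ht2 : t2 ∈ Set.Ioo (0:ℝ) 1) (h12 : t1 < t2) :
    ∑ k ∈ Finset.Icc (m+1) n, (n.choose k : ℝ) * asc (t1*c) k * asc ((1-t1)*c) (n-k)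
      < ∑ k ∈ Finset.Icc (m+1) n, (n.choose k : ℝ) * asc (t2*c) k * asc ((1-t2)*c) (n-k) := by
  set A : ℕ → ℝ := fun k => (n.choose k : ℝ) * asc (t1*c) k * asc ((1-t1)*c) (n-k) with hA
  set B : ℕ → ℝ := fun k => (n.choose k : ℝ) * asc (t2*c) k * asc ((1-t2)*c) (n-k) with hB
  have ha1 : 0 < t1 * c := mul_pos ht1.1 hc
  have ha2 : 0 < t2 * c := mul_pos ht2.1 hc
  have hb1 : 0 < (1 - t1) * c := mul_pos (by linarith [ht1.2]) hc
  have hb2 : 0 < (1 - t2) * c := mul_pos (by linarith [ht2.2]) hc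
  have hApos : ∀ k ∈ Finset.Icc 0 n, 0 < A k := by
    intro k hk
    have hkn : k ≤ n := (Finset.mem_Icc.mp hk).2
    have := Nat.choose_pos hkn
    have : (0:ℝ) < n.choose k := by exact_mod_cast this
    exact mul_pos (mul_pos this (asc_pos ha1 k)) (asc_pos hb1 (n-k))
  have hBpos : ∀ k ∈ Finset.Icc 0 n, 0 < B k := by
    intro k hk
    have hkn : k ≤ n := (Finset.mem_Icc.mp hk).2
    have := Nat.choose_pos hkn
    have : (0:ℝ) < n.choose k := by exact_mod_cast this
    exact mul_pos (mul_pos this (asc_pos ha2 k)) (asc_pos hb2 (n-k))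
  set D := asc c n with hD
  have hDpos : 0 < D := asc_pos hc n
  have hUA : ∑ k ∈ Finset.Icc 0 m, A k + ∑ k ∈ Finset.Icc (m+1) n, A k = D := by
    rw [Icc_split n m hmn A]; exact full_sum c t1 n
  have hVB : ∑ k ∈ Finset.Icc 0 m, B k + ∑ k ∈ Finset.Icc (m+1) n, B k = D := by
    rw [Icc_split n m hmn B]; exact full_sum c t2 n
  set U := ∑ k ∈ Finset.Icc 0 m, A k
  set Y := ∑ k ∈ Finset.Icc (m+1) n, A k
  set V := ∑ k ∈ Finset.Icc 0 m, B k
  set X := ∑ k ∈ Finset.Icc (m+1) n, B k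
  have hcross : ∀ k ∈ Finset.Icc (m+1) n, ∀ j ∈ Finset.Icc 0 m,
      A k * B j < B k * A j := by
    intro k hk j hj
    rw [Finset.mem_Icc] at hk hj
    have hjk : j < k := by omega
    have hkn : k ≤ n := hk.2
    have hCk : (0:ℝ) < n.choose k := by exact_mod_cast Nat.choose_pos hkn
    have hCj : (0:ℝ) < n.choose j := by exact_mod_cast Nat.choose_pos (by omega : j ≤ n)
    have h := cross_lt hc ht1 ht2 h12 hjk hkn
    simp only [hA, hB]
    nlinarith [mul_lt_mul_of_pos_left h (mul_pos hCk hCj)]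
  have hdouble : 0 < X * U - Y * V := by
    have heq : X * U - Y * V
        = ∑ k ∈ Finset.Icc (m+1) n, ∑ j ∈ Finset.Icc 0 m, (B k * A j - A k * B j) := by
      rw [Finset.sum_mul_sum, Finset.sum_mul_sum, ← Finset.sum_sub_distrib]
      apply Finset.sum_congr rfl
      intro k _
      rw [← Finset.sum_sub_distrib]
    rw [heq]
    apply Finset.sum_pos _ (Finset.nonempty_Icc.mpr hmn)
    intro k hk
    apply Finset.sum_pos _ (Finset.nonempty_Icc.mpr (Nat.zero_le m))
    intro j hj
    exact sub_pos.mpr (hcross k hk j hj)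
  have hU : U = D - Y := by linarith
  have hV : V = D - X := by linarith
  rw [hU, hV] at hdouble
  by_contra hcon
  push_neg at hcon
  nlinarith


/-- Let `n ≥ 2` be an integer, `ρ ∈ (1,n)` and `0 ≤ w < n`. Then
`t ↦ B̄_{n,t,ρ}(w)` is strictly increasing on `(0,1)` and takes values in `(0,1)` there. -/
theorem stmt_2 (n : ℕ) (hn : 2 ≤ n) (ρ : ℝ) (hρ : ρ ∈ Set.Ioo 1 (n : ℝ))
    (w : ℝ) (hw0 : 0 ≤ w) (hwn : w < n) :
    StrictMonoOn (betaBinomSurv n ρ w) (Set.Ioo 0 1) ∧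
    ∀ t ∈ Set.Ioo (0 : ℝ) 1, 0 < betaBinomSurv n ρ w t ∧ betaBinomSurv n ρ w t < 1 := by
  obtain ⟨hρ1, hρn⟩ := hρ
  set c : ℝ := ((n:ℝ) - ρ) / (ρ - 1) with hc_def
  have hc : 0 < c := div_pos (by linarith) (by linarith)
  set m : ℕ := (⌊w⌋).toNat with hm_def
  have hmn : m + 1 ≤ n := by
    have h1 : ⌊w⌋ < (n:ℤ) := Int.floor_lt.mpr (by exact_mod_cast hwn)
    have h2 : (0:ℤ) ≤ ⌊w⌋ := Int.floor_nonneg.mpr hw0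
    omega
  have hDpos : 0 < asc c n := asc_pos hc n
  have key : ∀ t ∈ Set.Ioo (0:ℝ) 1, betaBinomSurv n ρ w t
      = (∑ k ∈ Finset.Icc (m+1) n, (n.choose k : ℝ) * asc (t*c) k * asc ((1-t)*c) (n-k))
          / asc c n := by
    intro t ht
    have ha : t * ((n:ℝ) - ρ) / (ρ - 1) = t * c := by rw [hc_def]; ring
    have hb : (1-t) * ((n:ℝ) - ρ) / (ρ - 1) = (1-t) * c := by rw [hc_def]; ring
    have hta : 0 < t * c := mul_pos ht.1 hc
    have htb : 0 < (1-t) * c := mul_pos (by linarith [ht.2]) hc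
    have hab : t*c + (1-t)*c = c := by ring
    rw [betaBinomSurv]
    simp only [binomSurv, ha, hb, ← hm_def]
    rw [key_reduction n m hta htb, hab]
  constructor
  · intro t1 ht1 t2 ht2 h12
    rw [key t1 ht1, key t2 ht2]
    exact div_lt_div_of_pos_right (tail_sum_lt hc hmn ht1 ht2 h12) hDpos
  · intro t ht
    have hta : 0 < t * c := mul_pos ht.1 hc
    have htb : 0 < (1-t) * c := mul_pos (by linarith [ht.2]) hc
    rw [key t ht]
    constructor
    · apply div_pos _ hDpos
      apply Finset.sum_pos _ (Finset.nonempty_Icc.mpr hmn)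
      intro k hk
      rw [Finset.mem_Icc] at hk
      have hCk : (0:ℝ) < n.choose k := by exact_mod_cast Nat.choose_pos hk.2
      exact mul_pos (mul_pos hCk (asc_pos hta k)) (asc_pos htb (n-k))
    · rw [div_lt_one hDpos]
      have hfull := full_sum c t n
      have hsplit := Icc_split n m hmn
        (fun k => (n.choose k : ℝ) * asc (t*c) k * asc ((1-t)*c) (n-k))
      have hhead : 0 < ∑ k ∈ Finset.Icc 0 m,
          (n.choose k : ℝ) * asc (t*c) k * asc ((1-t)*c) (n-k) := by
        apply Finset.sum_pos _ (Finset.nonempty_Icc.mpr (Nat.zero_le m))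
        intro k hk
        rw [Finset.mem_Icc] at hk
        have hCk : (0:ℝ) < n.choose k := by
          exact_mod_cast Nat.choose_pos (by omega : k ≤ n)
        exact mul_pos (mul_pos hCk (asc_pos hta k)) (asc_pos htb (n-k))
      linarith [hsplit.trans hfull]
end

section
/- Let d ≥ 1 and p ≥ 1 be integers, let R be a p × d array of integers with 1 ≤ R_{ij} ≤ p, let C be the associated empirical copula, let m ≥ 2 be an integer, let j ∈ {1,…,d} and let u ∈ [0,1]^d. Then the Bernstein estimator satisfies the closed-form identity Ċ^{Bern}_{j,m}(u) = (m/p) ∑_{i=1}^{p} b_{m−1,u_j}( ⌈m R_{ij}/p⌉ − 1 ) ∏_{t≠j} B̄_{m,u_t}( ⌈m R_{it}/p⌉ − 1 ), where ⌈·⌉ denotes the ceiling function. -/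
/-- The Binomial(n,t) probability mass function `b_{n,t}(s) = C(n,s) t^s (1-t)^{n-s}`. -/
noncomputable def binomPMF (n : ℕ) (t : ℝ) (s : ℕ) : ℝ :=
  (n.choose s : ℝ) * t ^ s * (1 - t) ^ (n - s)

/-- The Binomial(n,t) survival function at the integer `s`, `B̄_{n,t}(s) = ∑_{k=s+1}^n b_{n,t}(k)`,
with the convention `B̄_{n,t}(s) = 1` for `s < 0`. -/
noncomputable def binomSurvZ (n : ℕ) (t : ℝ) (s : ℤ) : ℝ :=
  if s < 0 then 1 else ∑ k ∈ Finset.Icc (s.toNat + 1) n, binomPMF n t k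

/-- The empirical copula associated with a `p × d` array of integer ranks `R`:
`C(w) = (1/p) ∑_{i=1}^p ∏_{j=1}^d 1(R_{ij}/p ≤ w_j)`. -/
noncomputable def empCop (p d : ℕ) (R : Fin p → Fin d → ℕ) (w : Fin d → ℝ) : ℝ :=
  (1 / p : ℝ) * ∑ i : Fin p, ∏ j : Fin d, if (R i j : ℝ) / p ≤ w j then (1 : ℝ) else 0

/-- The Bernstein estimator of the `j`-th first-order partial derivative of the empirical copula:
`Ċ^{Bern}_{j,m}(u) = m ∑_{s} { C((s+e_j)/m) − C(s/m) } b_{m−1,u_j}(s_j) ∏_{t≠j} b_{m,u_t}(s_t)`,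
the sum being over integer vectors `s` with `0 ≤ s_j ≤ m−1` and `0 ≤ s_t ≤ m` for `t ≠ j`. -/
noncomputable def bernEst (p d : ℕ) (R : Fin p → Fin d → ℕ) (m : ℕ) (j : Fin d)
    (u : Fin d → ℝ) : ℝ :=
  (m : ℝ) *
    ∑ s ∈ Finset.univ.filter (fun s : Fin d → Fin (m + 1) => (s j : ℕ) ≤ m - 1),
      (empCop p d R (fun k => ((s k : ℝ) + if k = j then 1 else 0) / m)
          - empCop p d R (fun k => (s k : ℝ) / m)) *
        binomPMF (m - 1) (u j) (s j) *
        ∏ t ∈ Finset.univ.erase j, binomPMF m (u t) (s t)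

lemma sumJ (m : ℕ) (t : ℝ) (c : ℤ) (hc1 : 1 ≤ c) (hcm : c ≤ (m:ℤ)) :
    ∑ k ∈ Finset.range (m+1),
      ((if c ≤ (k:ℤ) + 1 then (1:ℝ) else 0) - (if c ≤ (k:ℤ) then 1 else 0)) * binomPMF (m-1) t k
      = binomPMF (m-1) t (c-1).toNat := by
  rw [Finset.sum_eq_single ((c-1).toNat)]
  · rw [if_pos (by omega), if_neg (by omega)]; ring
  · intro k _ hk
    by_cases h : c ≤ (k:ℤ)
    · rw [if_pos (by omega), if_pos h]; ring
    · rw [if_neg (by omega), if_neg h]; ring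
  · intro h; exact absurd (Finset.mem_range.mpr (by omega)) h

lemma sumT (m : ℕ) (t : ℝ) (c : ℤ) (hc1 : 1 ≤ c) :
    ∑ k ∈ Finset.range (m+1), (if c ≤ (k:ℤ) then (1:ℝ) else 0) * binomPMF m t k
      = binomSurvZ m t (c-1) := by
  rw [binomSurvZ, if_neg (by omega)]
  simp only [ite_mul, one_mul, zero_mul]
  rw [← Finset.sum_filter]
  congr 1
  ext k
  simp only [Finset.mem_filter, Finset.mem_range, Finset.mem_Icc]
  omega

/-- The Bernstein estimator of the `j`-th first-order partial derivative of the
empirical copula satisfies the closed-form identity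
`Ċ^{Bern}_{j,m}(u) = (m/p) ∑_{i=1}^p b_{m−1,u_j}(⌈m R_{ij}/p⌉ − 1) ∏_{t≠j} B̄_{m,u_t}(⌈m R_{it}/p⌉ − 1)`. -/
theorem stmt_4 (d p : ℕ) (hd : 1 ≤ d) (hp : 1 ≤ p)
    (R : Fin p → Fin d → ℕ) (hR : ∀ i j, R i j ∈ Finset.Icc 1 p)
    (m : ℕ) (hm : 2 ≤ m) (j : Fin d) (u : Fin d → ℝ)
    (hu : ∀ k, u k ∈ Set.Icc (0 : ℝ) 1) :
    bernEst p d R m j u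
      = (m : ℝ) / p *
        ∑ i : Fin p,
          binomPMF (m - 1) (u j) (Int.toNat (⌈(m : ℝ) * (R i j : ℝ) / p⌉ - 1)) *
            ∏ t ∈ Finset.univ.erase j,
              binomSurvZ m (u t) (⌈(m : ℝ) * (R i t : ℝ) / p⌉ - 1) := by
  classical
  have hp0 : (0:ℝ) < p := by exact_mod_cast hp
  have hm0 : (0:ℝ) < m := by exact_mod_cast (by omega : 0 < m)
  set c : Fin p → Fin d → ℤ := fun i t => ⌈(m : ℝ) * (R i t : ℝ) / p⌉ with hcdef
  have hind : ∀ i t (k : ℕ), ((R i t : ℝ) / p ≤ (k:ℝ) / m) ↔ ((c i t) ≤ (k:ℤ)) := by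
    intro i t k
    rw [hcdef]
    simp only
    rw [Int.ceil_le]
    push_cast
    rw [div_le_div_iff₀ hp0 hm0, div_le_iff₀ hp0]
    constructor <;> intro h <;> nlinarith
  have hc1 : ∀ i t, 1 ≤ c i t := by
    intro i t
    have h1 : (1:ℝ) ≤ (R i t:ℝ) := by exact_mod_cast (Finset.mem_Icc.mp (hR i t)).1
    exact Int.ceil_pos.mpr (div_pos (by nlinarith) hp0)
  have hcm : ∀ i t, c i t ≤ (m:ℤ) := by
    intro i t
    have h2 : (R i t:ℝ) ≤ (p:ℝ) := by exact_mod_cast (Finset.mem_Icc.mp (hR i t)).2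
    refine Int.ceil_le.mpr ?_
    push_cast
    rw [div_le_iff₀ hp0]
    nlinarith
  set F : Fin p → Fin d → Fin (m+1) → ℝ := fun i t k =>
    if t = j then
      ((if c i j ≤ ((k:ℕ):ℤ) + 1 then (1:ℝ) else 0) - (if c i j ≤ ((k:ℕ):ℤ) then 1 else 0))
        * binomPMF (m-1) (u j) k
    else (if c i t ≤ ((k:ℕ):ℤ) then (1:ℝ) else 0) * binomPMF m (u t) k with hF
  have step1 : bernEst p d R m j u = (m:ℝ) * ∑ s : Fin d → Fin (m+1),
      (empCop p d R (fun k => ((s k : ℝ) + if k = j then 1 else 0) / m)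
          - empCop p d R (fun k => (s k : ℝ) / m)) *
        binomPMF (m - 1) (u j) (s j) *
        ∏ t ∈ Finset.univ.erase j, binomPMF m (u t) (s t) := by
    rw [bernEst]
    congr 1
    refine Finset.sum_subset (Finset.filter_subset _ _) ?_
    intro s _ hs
    simp only [Finset.mem_filter, Finset.mem_univ, true_and, not_le] at hs
    have hsj : (s j : ℕ) = m := by have := (s j).isLt; omega
    have hz : binomPMF (m-1) (u j) (s j) = 0 := by
      rw [hsj, binomPMF, Nat.choose_eq_zero_of_lt (by omega)]; push_cast; ring
    rw [hz]; ring
  have key : ∀ s : Fin d → Fin (m+1),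
      (empCop p d R (fun k => ((s k : ℝ) + if k = j then 1 else 0) / m)
          - empCop p d R (fun k => (s k : ℝ) / m)) *
        binomPMF (m - 1) (u j) (s j) *
        ∏ t ∈ Finset.univ.erase j, binomPMF m (u t) (s t)
      = ∑ i : Fin p, (1/(p:ℝ)) * ∏ t : Fin d, F i t (s t) := by
    intro s
    have expand : (empCop p d R (fun k => ((s k : ℝ) + if k = j then 1 else 0) / m)
          - empCop p d R (fun k => (s k : ℝ) / m))
        = (1/(p:ℝ)) * ∑ i : Fin p,
            ((∏ t : Fin d, if (R i t : ℝ) / p ≤ ((s t : ℝ) + if t = j then 1 else 0) / m then (1:ℝ) else 0)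
            - ∏ t : Fin d, if (R i t : ℝ) / p ≤ (s t : ℝ) / m then (1:ℝ) else 0) := by
      rw [empCop, empCop, ← mul_sub, ← Finset.sum_sub_distrib]
    rw [expand]
    rw [show ∀ (S x y : ℝ), (1/(p:ℝ)) * S * x * y = (1/(p:ℝ)) * (S * (x * y)) from fun S x y => by ring]
    rw [Finset.sum_mul, Finset.mul_sum]
    refine Finset.sum_congr rfl fun i _ => ?_
    congr 1
    rw [← Finset.mul_prod_erase (f := fun t => if (R i t : ℝ) / p ≤ ((s t : ℝ) + if t = j then 1 else 0) / m then (1:ℝ) else 0) _ (Finset.mem_univ j)]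
    rw [← Finset.mul_prod_erase (f := fun t => if (R i t : ℝ) / p ≤ (s t : ℝ) / m then (1:ℝ) else 0) _ (Finset.mem_univ j)]
    rw [← Finset.mul_prod_erase (f := fun t => F i t (s t)) _ (Finset.mem_univ j)]
    have hPA : (∏ t ∈ Finset.univ.erase j, if (R i t : ℝ) / p ≤ ((s t : ℝ) + if t = j then 1 else 0) / m then (1:ℝ) else 0)
        = ∏ t ∈ Finset.univ.erase j, (if c i t ≤ ((s t : ℕ):ℤ) then (1:ℝ) else 0) := by
      refine Finset.prod_congr rfl fun t ht => ?_
      rw [if_neg (Finset.mem_erase.mp ht).1, add_zero]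
      exact if_congr (hind i t (s t)) rfl rfl
    have hPB : (∏ t ∈ Finset.univ.erase j, if (R i t : ℝ) / p ≤ (s t : ℝ) / m then (1:ℝ) else 0)
        = ∏ t ∈ Finset.univ.erase j, (if c i t ≤ ((s t : ℕ):ℤ) then (1:ℝ) else 0) := by
      refine Finset.prod_congr rfl fun t ht => ?_
      exact if_congr (hind i t (s t)) rfl rfl
    have hAj : (if (R i j : ℝ) / p ≤ ((s j : ℝ) + if j = j then 1 else 0) / m then (1:ℝ) else 0)
        = (if c i j ≤ ((s j : ℕ):ℤ) + 1 then (1:ℝ) else 0) := by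
      rw [if_pos rfl]
      have h := hind i j ((s j : ℕ) + 1)
      push_cast at h
      exact if_congr h rfl rfl
    have hBj : (if (R i j : ℝ) / p ≤ (s j : ℝ) / m then (1:ℝ) else 0)
        = (if c i j ≤ ((s j : ℕ):ℤ) then (1:ℝ) else 0) :=
      if_congr (hind i j (s j)) rfl rfl
    have hPF : (∏ t ∈ Finset.univ.erase j, F i t (s t))
        = ∏ t ∈ Finset.univ.erase j,
            ((if c i t ≤ ((s t : ℕ):ℤ) then (1:ℝ) else 0) * binomPMF m (u t) (s t)) := by
      refine Finset.prod_congr rfl fun t ht => ?_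
      rw [hF]
      simp only
      rw [if_neg (Finset.mem_erase.mp ht).1]
    have hFj : F i j (s j)
        = ((if c i j ≤ ((s j : ℕ):ℤ) + 1 then (1:ℝ) else 0)
            - (if c i j ≤ ((s j : ℕ):ℤ) then 1 else 0)) * binomPMF (m-1) (u j) (s j) := by
      simp [hF]
    rw [hPA, hPB, hAj, hBj, hPF, hFj, Finset.prod_mul_distrib]
    ring
  rw [step1]
  have step2 : (∑ s : Fin d → Fin (m+1),
      (empCop p d R (fun k => ((s k : ℝ) + if k = j then 1 else 0) / m)
          - empCop p d R (fun k => (s k : ℝ) / m)) *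
        binomPMF (m - 1) (u j) (s j) *
        ∏ t ∈ Finset.univ.erase j, binomPMF m (u t) (s t))
      = ∑ i : Fin p, (1/(p:ℝ)) * ∏ t : Fin d, ∑ k : Fin (m+1), F i t k := by
    rw [Finset.sum_congr rfl fun s _ => key s, Finset.sum_comm]
    refine Finset.sum_congr rfl fun i _ => ?_
    rw [← Finset.mul_sum]
    congr 1
    rw [Finset.prod_univ_sum, Fintype.piFinset_univ]
  rw [step2, Finset.mul_sum, Finset.mul_sum]
  refine Finset.sum_congr rfl fun i _ => ?_
  have hSj : (∑ k : Fin (m+1), F i j k) = binomPMF (m-1) (u j) (c i j - 1).toNat := by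
    rw [← sumJ m (u j) (c i j) (hc1 i j) (hcm i j)]
    rw [← Fin.sum_univ_eq_sum_range (fun k =>
      ((if c i j ≤ (k:ℤ) + 1 then (1:ℝ) else 0) - (if c i j ≤ (k:ℤ) then 1 else 0))
        * binomPMF (m-1) (u j) k) (m+1)]
    refine Finset.sum_congr rfl fun k _ => ?_
    rw [hF]
    simp
  have hSt : ∀ t ∈ Finset.univ.erase j,
      (∑ k : Fin (m+1), F i t k) = binomSurvZ m (u t) (c i t - 1) := by
    intro t ht
    rw [← sumT m (u t) (c i t) (hc1 i t)]
    rw [← Fin.sum_univ_eq_sum_range (fun k =>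
      (if c i t ≤ (k:ℤ) then (1:ℝ) else 0) * binomPMF m (u t) k) (m+1)]
    refine Finset.sum_congr rfl fun k _ => ?_
    rw [hF]
    simp only
    rw [if_neg (Finset.mem_erase.mp ht).1]
  rw [← Finset.mul_prod_erase (f := fun t => ∑ k : Fin (m+1), F i t k) _ (Finset.mem_univ j),
    hSj, Finset.prod_congr rfl hSt]
  simp only [hcdef]
  ring
end

section
/- Let d ≥ 1 and p ≥ 1 be integers, let R be a p × d array of integers with 1 ≤ R_{ij} ≤ p, let C be the associated empirical copula, let m ≥ 2 be an integer, let j ∈ {1,…,d} and let u ∈ [0,1]^d. Then ∑_{s} C(s_1/m, …, s_d/m) b_{m−1,u_j}(s_j) ∏_{t≠j} b_{m,u_t}(s_t) = (1/p) ∑_{i=1}^{p} B̄_{m−1,u_j}( ⌈m R_{ij}/p⌉ − 1 ) ∏_{t≠j} B̄_{m,u_t}( ⌈m R_{it}/p⌉ − 1 ), where the sum on the left is over all integer vectors s with 0 ≤ s_j ≤ m−1 and 0 ≤ s_t ≤ m for t ≠ j, and ⌈·⌉ denotes the ceiling function. -/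
lemma key (p m n r : ℕ) (hp : 1 ≤ p) (hm : 1 ≤ m) (hr1 : 1 ≤ r)
    (hnm : n ≤ m) (u : ℝ) :
    ∑ a : Fin (m+1), (if (r:ℝ)/p ≤ (a:ℝ)/m then (1:ℝ) else 0) * binomPMF n u a
      = binomSurvZ n u (⌈(m:ℝ)*r/p⌉ - 1) := by
  have hp0 : (0:ℝ) < p := by exact_mod_cast hp
  have hm0 : (0:ℝ) < m := by exact_mod_cast hm
  have hr0 : (0:ℝ) < r := by exact_mod_cast hr1
  set x : ℝ := (m:ℝ)*r/p with hxdef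
  have hx0 : 0 < x := by positivity
  have hce : 0 < ⌈x⌉ := Int.ceil_pos.mpr hx0
  set c : ℕ := ⌈x⌉.toNat with hcdef
  have hcz : (c:ℤ) = ⌈x⌉ := Int.toNat_of_nonneg (le_of_lt hce)
  have hcond : ∀ a : ℕ, ((r:ℝ)/p ≤ (a:ℝ)/m ↔ c ≤ a) := by
    intro a
    rw [div_le_div_iff₀ hp0 hm0]
    constructor
    · intro h
      have hx : x ≤ (a:ℝ) := by rw [hxdef, div_le_iff₀ hp0]; nlinarith
      have h2 : (⌈x⌉ : ℤ) ≤ (a : ℤ) := by exact_mod_cast Int.ceil_le.mpr hx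
      omega
    · intro h
      have hx : x ≤ (a:ℝ) := by
        have h2 : (⌈x⌉ : ℝ) ≤ (a:ℝ) := by exact_mod_cast (by omega : (⌈x⌉ : ℤ) ≤ (a:ℤ))
        linarith [Int.le_ceil x]
      rw [hxdef, div_le_iff₀ hp0] at hx
      nlinarith
  rw [Fin.sum_univ_eq_sum_range
    (fun a => (if (r:ℝ)/p ≤ (a:ℝ)/m then (1:ℝ) else 0) * binomPMF n u a)]
  have h1 : ∑ a ∈ Finset.range (m+1),
      (if (r:ℝ)/p ≤ (a:ℝ)/m then (1:ℝ) else 0) * binomPMF n u a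
      = ∑ a ∈ Finset.Icc c m, binomPMF n u a := by
    simp only [ite_mul, one_mul, zero_mul]
    rw [← Finset.sum_filter]
    apply Finset.sum_congr
    · ext a
      simp only [Finset.mem_filter, Finset.mem_range, Finset.mem_Icc, hcond a]
      omega
    · intros; rfl
  rw [h1]
  have hnn : ¬ (⌈x⌉ - 1 < 0) := by omega
  rw [binomSurvZ, if_neg hnn]
  have h2 : (⌈x⌉ - 1).toNat + 1 = c := by omega
  rw [h2]
  rw [Finset.sum_subset (Finset.Icc_subset_Icc_right hnm)]
  intro a ha hna
  simp only [Finset.mem_Icc] at ha hna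
  have : n < a := by omega
  simp [binomPMF, Nat.choose_eq_zero_of_lt this]


/-- With `C` the empirical copula of a `p × d` rank array `R`, `m ≥ 2`,
`j ∈ {1,…,d}` and `u ∈ [0,1]^d`,
`∑_{s} C(s/m) b_{m−1,u_j}(s_j) ∏_{t≠j} b_{m,u_t}(s_t)
  = (1/p) ∑_{i=1}^p B̄_{m−1,u_j}(⌈m R_{ij}/p⌉ − 1) ∏_{t≠j} B̄_{m,u_t}(⌈m R_{it}/p⌉ − 1)`,
where the sum on the left is over integer vectors `s` with `0 ≤ s_j ≤ m−1` and `0 ≤ s_t ≤ m`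
for `t ≠ j`. -/
theorem stmt_5 (d p : ℕ) (hd : 1 ≤ d) (hp : 1 ≤ p)
    (R : Fin p → Fin d → ℕ) (hR : ∀ i j, R i j ∈ Finset.Icc 1 p)
    (m : ℕ) (hm : 2 ≤ m) (j : Fin d) (u : Fin d → ℝ)
    (hu : ∀ k, u k ∈ Set.Icc (0 : ℝ) 1) :
    ∑ s ∈ Finset.univ.filter (fun s : Fin d → Fin (m + 1) => (s j : ℕ) ≤ m - 1),
        empCop p d R (fun k => (s k : ℝ) / m) *
          binomPMF (m - 1) (u j) (s j) *
          ∏ t ∈ Finset.univ.erase j, binomPMF m (u t) (s t)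
      = (1 / p : ℝ) *
        ∑ i : Fin p,
          binomSurvZ (m - 1) (u j) (⌈(m : ℝ) * (R i j : ℝ) / p⌉ - 1) *
            ∏ t ∈ Finset.univ.erase j,
              binomSurvZ m (u t) (⌈(m : ℝ) * (R i t : ℝ) / p⌉ - 1) := by
  have hm1 : 1 ≤ m := by omega
  set g : Fin p → Fin d → Fin (m+1) → ℝ := fun i k a =>
    (if (R i k : ℝ)/p ≤ (a:ℝ)/m then (1:ℝ) else 0) *
      binomPMF (if k = j then m-1 else m) (u k) a with hg
  -- Step 1: drop the filter
  have step1 : ∑ s ∈ Finset.univ.filter (fun s : Fin d → Fin (m + 1) => (s j : ℕ) ≤ m - 1),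
        empCop p d R (fun k => (s k : ℝ) / m) * binomPMF (m - 1) (u j) (s j) *
          ∏ t ∈ Finset.univ.erase j, binomPMF m (u t) (s t)
      = ∑ s : Fin d → Fin (m+1),
        empCop p d R (fun k => (s k : ℝ) / m) * binomPMF (m - 1) (u j) (s j) *
          ∏ t ∈ Finset.univ.erase j, binomPMF m (u t) (s t) := by
    rw [Finset.sum_filter]
    apply Finset.sum_congr rfl
    intro s _
    by_cases h : (s j : ℕ) ≤ m - 1
    · rw [if_pos h]
    · rw [if_neg h]
      have hsj : (s j : ℕ) = m := by have := (s j).isLt; omega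
      have : binomPMF (m-1) (u j) (s j) = 0 := by
        simp [binomPMF, hsj, Nat.choose_eq_zero_of_lt (by omega : m - 1 < m)]
      rw [this]; ring
  rw [step1]
  -- Step 2: pointwise rewrite into product of g
  have step2 : ∀ s : Fin d → Fin (m+1),
      empCop p d R (fun k => (s k : ℝ) / m) * binomPMF (m - 1) (u j) (s j) *
          ∏ t ∈ Finset.univ.erase j, binomPMF m (u t) (s t)
      = (1/p : ℝ) * ∑ i : Fin p, ∏ k : Fin d, g i k (s k) := by
    intro s
    rw [empCop, mul_assoc, mul_assoc, Finset.sum_mul]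
    congr 1
    apply Finset.sum_congr rfl
    intro i _
    have hprod : ∏ k : Fin d, g i k (s k)
        = (∏ k : Fin d, if (R i k : ℝ)/p ≤ (s k : ℝ)/m then (1:ℝ) else 0) *
          ∏ k : Fin d, binomPMF (if k = j then m-1 else m) (u k) (s k) := by
      rw [← Finset.prod_mul_distrib]
    rw [hprod]
    congr 1
    rw [← Finset.mul_prod_erase Finset.univ _ (Finset.mem_univ j), if_pos rfl]
    congr 1
    apply Finset.prod_congr rfl
    intro t ht
    rw [if_neg (Finset.ne_of_mem_erase ht)]
  simp only [step2]
  rw [← Finset.mul_sum, Finset.sum_comm]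
  congr 1
  apply Finset.sum_congr rfl
  intro i _
  -- Step 3: factorize the sum over s
  have step3 : ∑ s : Fin d → Fin (m+1), ∏ k : Fin d, g i k (s k)
      = ∏ k : Fin d, ∑ a : Fin (m+1), g i k a := by
    rw [Finset.prod_univ_sum]
    rw [Fintype.piFinset_univ]
  rw [step3]
  rw [← Finset.mul_prod_erase Finset.univ _ (Finset.mem_univ j)]
  have hR1 : ∀ k, 1 ≤ R i k := fun k => (Finset.mem_Icc.mp (hR i k)).1
  congr 1
  · have := key p m (m-1) (R i j) hp hm1 (hR1 j) (by omega) (u j)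
    rw [← this]
    apply Finset.sum_congr rfl
    intro a _
    simp [hg]
  · apply Finset.prod_congr rfl
    intro t ht
    have := key p m m (R i t) hp hm1 (hR1 t) (le_refl m) (u t)
    rw [← this]
    apply Finset.sum_congr rfl
    intro a _
    simp [hg, if_neg (Finset.ne_of_mem_erase ht)]
end

section
/- Let d ≥ 1 and p ≥ 1 be integers, let R be a p × d array of integers with 1 ≤ R_{ij} ≤ p, let C be the associated empirical copula, let m ≥ 2 be an integer, let j ∈ {1,…,d} and let u ∈ [0,1]^d. Then ∑_{s} C((s + e_j)/m) b_{m−1,u_j}(s_j) ∏_{t≠j} b_{m,u_t}(s_t) = (1/p) ∑_{i=1}^{p} B̄_{m−1,u_j}( ⌈m R_{ij}/p⌉ − 2 ) ∏_{t≠j} B̄_{m,u_t}( ⌈m R_{it}/p⌉ − 1 ), where the sum on the left is over all integer vectors s with 0 ≤ s_j ≤ m−1 and 0 ≤ s_t ≤ m for t ≠ j, e_j is the j-th canonical basis vector of ℝ^d, and ⌈·⌉ denotes the ceiling function. -/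
lemma binomPMF_sum (n : ℕ) (t : ℝ) : ∑ k ∈ Finset.range (n+1), binomPMF n t k = 1 := by
  have h := add_pow t (1 - t) n
  have e : t + (1 - t) = 1 := by ring
  rw [e, one_pow] at h
  rw [h]
  apply Finset.sum_congr rfl
  intro k _
  unfold binomPMF
  ring

lemma sumA (m : ℕ) (t : ℝ) (c : ℤ) (hc : 1 ≤ c) :
    ∑ x : Fin (m+1), (if c ≤ (x : ℤ) then (1:ℝ) else 0) * binomPMF m t x
      = binomSurvZ m t (c - 1) := by
  rw [binomSurvZ, if_neg (by omega)]
  have h1 : (c - 1).toNat + 1 = c.toNat := by omega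
  rw [h1, Fin.sum_univ_eq_sum_range (fun x => (if c ≤ (x:ℤ) then (1:ℝ) else 0) * binomPMF m t x)]
  have hset : Finset.Icc c.toNat m = (Finset.range (m+1)).filter (fun x : ℕ => c ≤ (x:ℤ)) := by
    ext x
    simp only [Finset.mem_Icc, Finset.mem_range, Finset.mem_filter]
    omega
  rw [hset, Finset.sum_filter]
  apply Finset.sum_congr rfl
  intro x _
  split <;> simp

lemma sumB (m : ℕ) (hm : 2 ≤ m) (t : ℝ) (c : ℤ) (hc : 1 ≤ c) (hcm : c ≤ (m:ℤ)) :
    ∑ x : Fin (m+1), (if c - 1 ≤ (x : ℤ) then (1:ℝ) else 0) * binomPMF (m-1) t x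
      = binomSurvZ (m-1) t (c - 2) := by
  have hz : binomPMF (m-1) t m = 0 := by
    simp [binomPMF, Nat.choose_eq_zero_of_lt (show m-1 < m by omega)]
  by_cases h1 : c = 1
  · subst h1
    rw [binomSurvZ, if_pos (by omega)]
    have : ∀ x : Fin (m+1), (if (1:ℤ) - 1 ≤ (x : ℤ) then (1:ℝ) else 0) * binomPMF (m-1) t x
        = binomPMF (m-1) t x := by
      intro x; rw [if_pos (by omega), one_mul]
    rw [Finset.sum_congr rfl (fun x _ => this x)]
    rw [Fin.sum_univ_eq_sum_range (fun x => binomPMF (m-1) t x)]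
    rw [Finset.sum_range_succ, hz, add_zero]
    have : m = (m - 1) + 1 := by omega
    rw [this]
    exact binomPMF_sum (m-1) t
  · have h2 : 2 ≤ c := by omega
    rw [binomSurvZ, if_neg (by omega)]
    have h3 : (c - 2).toNat + 1 = (c-1).toNat := by omega
    rw [h3, Fin.sum_univ_eq_sum_range
      (fun x => (if c - 1 ≤ (x:ℤ) then (1:ℝ) else 0) * binomPMF (m-1) t x)]
    have hset : Finset.Icc (c-1).toNat m = (Finset.range (m+1)).filter (fun x : ℕ => c - 1 ≤ (x:ℤ)) := by
      ext x
      simp only [Finset.mem_Icc, Finset.mem_range, Finset.mem_filter]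
      omega
    have step : ∑ x ∈ Finset.range (m+1), (if c - 1 ≤ (x:ℤ) then (1:ℝ) else 0) * binomPMF (m-1) t x
        = ∑ x ∈ Finset.Icc (c-1).toNat m, binomPMF (m-1) t x := by
      rw [hset, Finset.sum_filter]
      apply Finset.sum_congr rfl
      intro x _
      split <;> simp
    rw [step]
    have hle : (c-1).toNat ≤ (m-1) + 1 := by omega
    have hm1 : m = (m - 1) + 1 := by omega
    rw [hm1, Finset.sum_Icc_succ_top hle]
    rw [show (m-1)+1 = m from by omega, hz, add_zero]


/-- With `C` the empirical copula of a `p × d` rank array `R`, `m ≥ 2`,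
`j ∈ {1,…,d}` and `u ∈ [0,1]^d`,
`∑_{s} C((s+e_j)/m) b_{m−1,u_j}(s_j) ∏_{t≠j} b_{m,u_t}(s_t)
  = (1/p) ∑_{i=1}^p B̄_{m−1,u_j}(⌈m R_{ij}/p⌉ − 2) ∏_{t≠j} B̄_{m,u_t}(⌈m R_{it}/p⌉ − 1)`,
where the sum on the left is over integer vectors `s` with `0 ≤ s_j ≤ m−1` and `0 ≤ s_t ≤ m`
for `t ≠ j`, and `B̄` uses the convention `B̄_{n,t}(s) = 1` for `s < 0`. -/
theorem stmt_6 (d p : ℕ) (hd : 1 ≤ d) (hp : 1 ≤ p)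
    (R : Fin p → Fin d → ℕ) (hR : ∀ i j, R i j ∈ Finset.Icc 1 p)
    (m : ℕ) (hm : 2 ≤ m) (j : Fin d) (u : Fin d → ℝ)
    (hu : ∀ k, u k ∈ Set.Icc (0 : ℝ) 1) :
    ∑ s ∈ Finset.univ.filter (fun s : Fin d → Fin (m + 1) => (s j : ℕ) ≤ m - 1),
        empCop p d R (fun k => ((s k : ℝ) + if k = j then 1 else 0) / m) *
          binomPMF (m - 1) (u j) (s j) *
          ∏ t ∈ Finset.univ.erase j, binomPMF m (u t) (s t)
      = (1 / p : ℝ) *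
        ∑ i : Fin p,
          binomSurvZ (m - 1) (u j) (⌈(m : ℝ) * (R i j : ℝ) / p⌉ - 2) *
            ∏ t ∈ Finset.univ.erase j,
              binomSurvZ m (u t) (⌈(m : ℝ) * (R i t : ℝ) / p⌉ - 1) := by
  have hmn : 0 < m := by omega
  have hm0 : (0:ℝ) < m := by exact_mod_cast hmn
  have hp0 : (0:ℝ) < p := by exact_mod_cast hp
  have hc1 : ∀ i k, 1 ≤ ⌈(m:ℝ) * (R i k : ℝ) / p⌉ := by
    intro i k
    have hR1 : 1 ≤ R i k := (Finset.mem_Icc.mp (hR i k)).1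
    have h0 : (0:ℝ) < (R i k : ℝ) := by exact_mod_cast Nat.lt_of_lt_of_le Nat.zero_lt_one hR1
    exact Int.ceil_pos.mpr (div_pos (mul_pos hm0 h0) hp0)
  have hcm : ∀ i k, ⌈(m:ℝ) * (R i k : ℝ) / p⌉ ≤ (m:ℤ) := by
    intro i k
    have hR2 : (R i k : ℝ) ≤ p := by exact_mod_cast (Finset.mem_Icc.mp (hR i k)).2
    apply Int.ceil_le.mpr
    push_cast
    rw [div_le_iff₀ hp0]
    nlinarith
  have iff0 : ∀ (r x : ℕ), ((r:ℝ)/p ≤ (x:ℝ)/m) ↔ (⌈(m:ℝ)*(r:ℝ)/p⌉ ≤ (x:ℤ)) := by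
    intro r x
    rw [Int.ceil_le, div_le_div_iff₀ hp0 hm0]
    push_cast
    rw [div_le_iff₀ hp0]
    constructor <;> intro h <;> linarith
  have iff1 : ∀ (r x : ℕ), ((r:ℝ)/p ≤ ((x:ℝ)+1)/m) ↔ (⌈(m:ℝ)*(r:ℝ)/p⌉ - 1 ≤ (x:ℤ)) := by
    intro r x
    rw [sub_le_iff_le_add, Int.ceil_le, div_le_div_iff₀ hp0 hm0]
    push_cast
    rw [div_le_iff₀ hp0]
    constructor <;> intro h <;> linarith
  have colA : ∀ (i : Fin p) (k : Fin d),
      ∑ x : Fin (m+1), (if (R i k:ℝ)/p ≤ (x:ℝ)/m then (1:ℝ) else 0) * binomPMF m (u k) x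
        = binomSurvZ m (u k) (⌈(m:ℝ)*(R i k:ℝ)/p⌉ - 1) := by
    intro i k
    rw [← sumA m (u k) _ (hc1 i k)]
    apply Finset.sum_congr rfl
    intro x _
    exact congrArg (· * binomPMF m (u k) x) (if_congr (iff0 (R i k) x) rfl rfl)
  have colB : ∀ i : Fin p,
      ∑ x : Fin (m+1), (if (R i j:ℝ)/p ≤ ((x:ℝ)+1)/m then (1:ℝ) else 0) * binomPMF (m-1) (u j) x
        = binomSurvZ (m-1) (u j) (⌈(m:ℝ)*(R i j:ℝ)/p⌉ - 2) := by
    intro i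
    rw [← sumB m hm (u j) _ (hc1 i j) (hcm i j)]
    apply Finset.sum_congr rfl
    intro x _
    exact congrArg (· * binomPMF (m-1) (u j) x) (if_congr (iff1 (R i j) x) rfl rfl)
  have vanish : ∀ s : Fin d → Fin (m+1), s ∈ Finset.univ →
      s ∉ Finset.univ.filter (fun s : Fin d → Fin (m+1) => (s j : ℕ) ≤ m - 1) →
      empCop p d R (fun k => ((s k : ℝ) + if k = j then 1 else 0) / m) *
        binomPMF (m - 1) (u j) (s j) *
        ∏ t ∈ Finset.univ.erase j, binomPMF m (u t) (s t) = 0 := by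
    intro s _ hs
    simp only [Finset.mem_filter, Finset.mem_univ, true_and, not_le] at hs
    have hsj : (s j : ℕ) = m := by have := (s j).isLt; omega
    have hz : binomPMF (m-1) (u j) (s j) = 0 := by
      rw [hsj]; simp [binomPMF, Nat.choose_eq_zero_of_lt (show m-1 < m by omega)]
    rw [hz, mul_zero, zero_mul]
  rw [Finset.sum_subset (Finset.filter_subset _ _) vanish]
  have expand : ∀ s : Fin d → Fin (m+1),
      empCop p d R (fun k => ((s k : ℝ) + if k = j then 1 else 0) / m) *
        binomPMF (m - 1) (u j) (s j) *
        ∏ t ∈ Finset.univ.erase j, binomPMF m (u t) (s t)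
      = (1/p:ℝ) * ∑ i : Fin p, ∏ k : Fin d,
          ((if (R i k:ℝ)/p ≤ ((s k:ℝ) + if k = j then 1 else 0)/m then (1:ℝ) else 0) *
           (if k = j then binomPMF (m-1) (u j) (s k) else binomPMF m (u k) (s k))) := by
    intro s
    rw [empCop]
    rw [mul_assoc, mul_assoc]
    congr 1
    rw [Finset.sum_mul]
    apply Finset.sum_congr rfl
    intro i _
    rw [Finset.prod_mul_distrib]
    congr 1
    rw [← Finset.mul_prod_erase Finset.univ
      (fun k => if k = j then binomPMF (m-1) (u j) (s k) else binomPMF m (u k) (s k))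
      (Finset.mem_univ j)]
    rw [if_pos rfl]
    congr 1
    apply Finset.prod_congr rfl
    intro t ht
    rw [if_neg (Finset.mem_erase.mp ht).1]
  rw [Finset.sum_congr rfl (fun s _ => expand s)]
  rw [← Finset.mul_sum, Finset.sum_comm]
  congr 1
  apply Finset.sum_congr rfl
  intro i _
  rw [← Fintype.piFinset_univ,
    ← Finset.prod_univ_sum (fun _ : Fin d => (Finset.univ : Finset (Fin (m+1))))
      (fun k x => (if (R i k:ℝ)/p ≤ ((x:ℝ) + if k = j then 1 else 0)/m then (1:ℝ) else 0) *
        (if k = j then binomPMF (m-1) (u j) x else binomPMF m (u k) x))]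
  rw [← Finset.mul_prod_erase Finset.univ _ (Finset.mem_univ j)]
  congr 1
  · rw [← colB i]
    apply Finset.sum_congr rfl
    intro x _
    simp
  · apply Finset.prod_congr rfl
    intro t ht
    have htj : t ≠ j := (Finset.mem_erase.mp ht).1
    rw [← colA i t]
    apply Finset.sum_congr rfl
    intro x _
    simp only [if_neg htj, add_zero]
end

section
/- Let d ≥ 1 and p ≥ 1 be integers and let R be a p × d array of integers such that for every j ∈ {1,…,d} the map i ↦ R_{ij} is a bijection from {1,…,p} onto {1,…,p} (no ties). Let C be the associated empirical copula, let m ≥ 2 be an integer and let j ∈ {1,…,d}. Then for every u ∈ [0,1]^d with u_j + 1/m ≤ 1, 0 ≤ C(u + e_j/m) − C(u) ≤ ⌊p(u_j + 1/m)⌋/p − ⌊p u_j⌋/p ≤ 1/m + 1/p, where e_j is the j-th canonical basis vector of ℝ^d and ⌊·⌋ denotes the floor function. -/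
lemma count_lemma (p : ℕ) (hp : 1 ≤ p) (f : Fin p → ℕ)
    (hf : ∀ i, f i ∈ Finset.Icc 1 p) (hinj : Function.Injective f)
    (w : ℝ) (hw0 : 0 ≤ w) (hw1 : w ≤ 1) :
    ∑ i : Fin p, (if (f i : ℝ) / p ≤ w then (1 : ℝ) else 0) = (⌊(p : ℝ) * w⌋ : ℝ) := by
  have hppos : (0 : ℝ) < p := by exact_mod_cast hp
  have hfl0 : 0 ≤ ⌊(p : ℝ) * w⌋ := Int.floor_nonneg.2 (by positivity)
  set n : ℕ := (⌊(p : ℝ) * w⌋).toNat with hn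
  have hnZ : (n : ℤ) = ⌊(p : ℝ) * w⌋ := Int.toNat_of_nonneg hfl0
  have hnp : n ≤ p := by
    have : (⌊(p : ℝ) * w⌋ : ℝ) ≤ p := by
      calc (⌊(p : ℝ) * w⌋ : ℝ) ≤ (p : ℝ) * w := Int.floor_le _
        _ ≤ (p : ℝ) * 1 := by nlinarith
        _ = p := by ring
    have : ⌊(p : ℝ) * w⌋ ≤ (p : ℤ) := by exact_mod_cast this
    omega
  have hcond : ∀ i, ((f i : ℝ) / p ≤ w ↔ f i ≤ n) := by
    intro i
    rw [div_le_iff₀ hppos]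
    constructor
    · intro h
      have : (f i : ℤ) ≤ ⌊(p : ℝ) * w⌋ := Int.le_floor.2 (by push_cast; linarith [h])
      omega
    · intro h
      have : (f i : ℤ) ≤ ⌊(p : ℝ) * w⌋ := by omega
      have := Int.le_floor.1 this
      push_cast at this
      linarith
  have hsum : ∑ i : Fin p, (if (f i : ℝ) / p ≤ w then (1 : ℝ) else 0)
      = ((Finset.univ.filter (fun i : Fin p => f i ≤ n)).card : ℝ) := by
    simp only [hcond]
    rw [Finset.sum_boole]
  rw [hsum]
  have himg : Finset.univ.image f = Finset.Icc 1 p := by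
    apply Finset.eq_of_subset_of_card_le
    · intro x hx
      simp only [Finset.mem_image] at hx
      obtain ⟨i, _, rfl⟩ := hx
      exact hf i
    · rw [Finset.card_image_of_injective _ hinj]
      simp
  have hfilt : (Finset.univ.filter (fun i : Fin p => f i ≤ n)).image f
      = (Finset.Icc 1 p).filter (· ≤ n) := by
    rw [← himg]
    ext x
    simp only [Finset.mem_image, Finset.mem_filter]
    constructor
    · rintro ⟨i, hi, rfl⟩
      simp only [Finset.mem_filter, Finset.mem_univ, true_and] at hi
      exact ⟨⟨i, Finset.mem_univ i, rfl⟩, hi⟩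
    · rintro ⟨⟨i, _, rfl⟩, hx⟩
      exact ⟨i, by simp [hx], rfl⟩
  have hcard : (Finset.univ.filter (fun i : Fin p => f i ≤ n)).card
      = ((Finset.Icc 1 p).filter (· ≤ n)).card := by
    rw [← hfilt, Finset.card_image_of_injective _ hinj]
  have hIcc : (Finset.Icc 1 p).filter (· ≤ n) = Finset.Icc 1 n := by
    ext k
    simp only [Finset.mem_filter, Finset.mem_Icc]
    omega
  rw [hcard, hIcc, Nat.card_Icc]
  have : n + 1 - 1 = n := by omega
  rw [this, ← hnZ]
  push_cast
  ring

/-- Under the no-ties condition (each column of the rank array `R` is a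
bijection of `{1,…,p}`, expressed as injectivity together with `R_{ij} ∈ {1,…,p}`), for every
`m ≥ 2`, every `j` and every `u ∈ [0,1]^d` with `u_j + 1/m ≤ 1`,
`0 ≤ C(u + e_j/m) − C(u) ≤ ⌊p(u_j + 1/m)⌋/p − ⌊p u_j⌋/p ≤ 1/m + 1/p`. -/
theorem stmt_11 (d p : ℕ) (hd : 1 ≤ d) (hp : 1 ≤ p)
    (R : Fin p → Fin d → ℕ)
    (hR : ∀ i j, R i j ∈ Finset.Icc 1 p)
    (hinj : ∀ j, Function.Injective (fun i : Fin p => R i j))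
    (m : ℕ) (hm : 2 ≤ m) (j : Fin d) (u : Fin d → ℝ)
    (hu : ∀ k, u k ∈ Set.Icc (0 : ℝ) 1) (huj : u j + 1 / m ≤ 1) :
    0 ≤ empCop p d R (Function.update u j (u j + 1 / m)) - empCop p d R u ∧
    empCop p d R (Function.update u j (u j + 1 / m)) - empCop p d R u
      ≤ (⌊(p : ℝ) * (u j + 1 / m)⌋ : ℝ) / p - (⌊(p : ℝ) * u j⌋ : ℝ) / p ∧
    (⌊(p : ℝ) * (u j + 1 / m)⌋ : ℝ) / p - (⌊(p : ℝ) * u j⌋ : ℝ) / p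
      ≤ 1 / m + 1 / p := by
  have hppos : (0 : ℝ) < p := by exact_mod_cast hp
  have hmpos : (0 : ℝ) < m := by
    have : (0 : ℕ) < m := by omega
    exact_mod_cast this
  set u' := Function.update u j (u j + 1 / m) with hu'
  have hu'j : u' j = u j + 1 / m := by simp [hu']
  have hu'k : ∀ k, k ≠ j → u' k = u k := by
    intro k hk; simp [hu', Function.update_of_ne hk]
  have hle : ∀ k, u k ≤ u' k := by
    intro k
    by_cases hk : k = j
    · subst hk; rw [hu'j]; linarith [one_div_pos.mpr hmpos]
    · rw [hu'k k hk]
  -- indicator functions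
  set F : (Fin d → ℝ) → Fin p → Fin d → ℝ :=
    fun w i k => if (R i k : ℝ) / p ≤ w k then 1 else 0 with hF
  have hF01 : ∀ w i k, 0 ≤ F w i k ∧ F w i k ≤ 1 := by
    intro w i k; simp only [hF]; split <;> norm_num
  have hFle : ∀ i k, F u i k ≤ F u' i k := by
    intro i k
    simp only [hF]
    split
    · rename_i h
      rw [if_pos (le_trans h (hle k))]
    · split <;> norm_num
  -- part 1
  have hprodle : ∀ i : Fin p, ∏ k : Fin d, F u i k ≤ ∏ k : Fin d, F u' i k := by
    intro i
    apply Finset.prod_le_prod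
    · intro k _; exact (hF01 u i k).1
    · intro k _; exact hFle i k
  have h1 : empCop p d R u ≤ empCop p d R u' := by
    unfold empCop
    apply mul_le_mul_of_nonneg_left _ (by positivity)
    exact Finset.sum_le_sum fun i _ => hprodle i
  refine ⟨by linarith, ?_, ?_⟩
  -- part 2
  · have hkey : ∀ i : Fin p,
        (∏ k : Fin d, F u' i k) - (∏ k : Fin d, F u i k) ≤ F u' i j - F u i j := by
      intro i
      have hP : ∀ w, ∏ k : Fin d, F w i k = F w i j * ∏ k ∈ Finset.univ.erase j, F w i k := by
        intro w
        rw [Finset.mul_prod_erase Finset.univ (fun k => F w i k) (Finset.mem_univ j)]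
      have hsame : ∏ k ∈ Finset.univ.erase j, F u' i k = ∏ k ∈ Finset.univ.erase j, F u i k := by
        apply Finset.prod_congr rfl
        intro k hk
        have : k ≠ j := Finset.ne_of_mem_erase hk
        simp only [hF, hu'k k this]
      set P := ∏ k ∈ Finset.univ.erase j, F u i k with hPdef
      have hP0 : 0 ≤ P := Finset.prod_nonneg fun k _ => (hF01 u i k).1
      have hP1 : P ≤ 1 := Finset.prod_le_one (fun k _ => (hF01 u i k).1) (fun k _ => (hF01 u i k).2)
      rw [hP u', hP u, hsame, ← hPdef]
      have hd : 0 ≤ F u' i j - F u i j := by linarith [hFle i j]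
      nlinarith
    have hsum2 : ∑ i : Fin p, (F u' i j - F u i j)
        = (⌊(p : ℝ) * (u j + 1 / m)⌋ : ℝ) - (⌊(p : ℝ) * u j⌋ : ℝ) := by
      rw [Finset.sum_sub_distrib]
      have c1 : ∑ i : Fin p, F u' i j = (⌊(p : ℝ) * (u j + 1 / m)⌋ : ℝ) := by
        have := count_lemma p hp (fun i => R i j) (fun i => hR i j) (hinj j)
          (u j + 1 / m) (by have := (hu j).1; positivity) huj
        simpa [hF, hu'j] using this
      have c2 : ∑ i : Fin p, F u i j = (⌊(p : ℝ) * u j⌋ : ℝ) := by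
        have := count_lemma p hp (fun i => R i j) (fun i => hR i j) (hinj j)
          (u j) (hu j).1 (hu j).2
        simpa [hF] using this
      rw [c1, c2]
    have hsumle : (∑ i : Fin p, ∏ k : Fin d, F u' i k) - (∑ i : Fin p, ∏ k : Fin d, F u i k)
        ≤ (⌊(p : ℝ) * (u j + 1 / m)⌋ : ℝ) - (⌊(p : ℝ) * u j⌋ : ℝ) := by
      rw [← hsum2, ← Finset.sum_sub_distrib]
      exact Finset.sum_le_sum fun i _ => hkey i
    unfold empCop
    rw [← mul_sub]
    rw [div_sub_div_same] at *
    calc (1 / (p : ℝ)) * ((∑ i : Fin p, ∏ k : Fin d, F u' i k)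
            - (∑ i : Fin p, ∏ k : Fin d, F u i k))
        ≤ (1 / (p : ℝ)) * ((⌊(p : ℝ) * (u j + 1 / m)⌋ : ℝ) - (⌊(p : ℝ) * u j⌋ : ℝ)) :=
          mul_le_mul_of_nonneg_left hsumle (by positivity)
      _ = ((⌊(p : ℝ) * (u j + 1 / m)⌋ : ℝ) - (⌊(p : ℝ) * u j⌋ : ℝ)) / p := by ring
  -- part 3
  · have h3 : (⌊(p : ℝ) * (u j + 1 / m)⌋ : ℝ) ≤ (p : ℝ) * u j + (p : ℝ) / m := by
      calc (⌊(p : ℝ) * (u j + 1 / m)⌋ : ℝ) ≤ (p : ℝ) * (u j + 1 / m) := Int.floor_le _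
        _ = (p : ℝ) * u j + (p : ℝ) / m := by ring
    have h4 : (p : ℝ) * u j - 1 < (⌊(p : ℝ) * u j⌋ : ℝ) := Int.sub_one_lt_floor _
    rw [div_sub_div_same, div_le_iff₀ hppos]
    have : (1 / (m : ℝ) + 1 / p) * p = (p : ℝ) / m + 1 := by
      field_simp
    rw [this]
    linarith
end
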